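/- Let r₁, r₂, r₃ be a separated triple of rays in ℝ² whose joint region Y = X₁ ∩ X₂ ∩ X₃ is nonempty. Then Y ⊆ X, where X is the triangle spanned by the initial points of the three rays. -/

import Mathlib

/-!
If a point `x` of the joint region lay outside the triangle `X`, a linear functional `f` would
separate `x` from `X`. Since `x` is reached from a side of `X` by moving along `v i`, every
direction satisfies `f (v i) > 0`, so all three rays run off to `f = +∞` and a level line of `f`
lying above `X` meets all of them, contradicting separation.
-/

/-- A line in a real vector space: a set of the form `{p + t • v : t ∈ ℝ}` with `v ≠ 0`. -/
def IsLine {E : Type*} [AddCommGroup E] [Module ℝ E] (s : Set E) : Prop :=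
  ∃ p v : E, v ≠ 0 ∧ s = {x | ∃ t : ℝ, x = p + t • v}

/-- The ray with initial point `p` and direction `v`. -/
def raySet (p v : ℝ × ℝ) : Set (ℝ × ℝ) := {x | ∃ t : ℝ, 0 ≤ t ∧ x = p + t • v}

/-- A triple of rays (given by initial points `p i` and directions `v i`) is *separated*
if the directions are pairwise linearly independent and no line meets all three rays. -/
def SeparatedTriple (p v : Fin 3 → ℝ × ℝ) : Prop :=
  (∀ i, v i ≠ 0) ∧ (∀ i j, i ≠ j → LinearIndependent ℝ ![v i, v j]) ∧
  ¬ ∃ L : Set (ℝ × ℝ), IsLine L ∧ ∀ i, (L ∩ raySet (p i) (v i)).Nonempty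

/-- The half-strip `X_i`: points on translates of ray `i` with initial point on the side
`s_i` of the triangle of initial points opposite to `p i`. -/
def halfStrip (p v : Fin 3 → ℝ × ℝ) (i : Fin 3) : Set (ℝ × ℝ) :=
  {x | ∃ q ∈ segment ℝ (p (i + 1)) (p (i + 2)), ∃ t : ℝ, 0 ≤ t ∧ x = q + t • v i}

/-- The joint region `X₁ ∩ X₂ ∩ X₃`. -/
def jointRegion (p v : Fin 3 → ℝ × ℝ) : Set (ℝ × ℝ) := ⋂ i, halfStrip p v i

theorem isLine_setOf_apply_eq {E : Type*} [AddCommGroup E] [Module ℝ E] [FiniteDimensional ℝ E]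
    (hE : Module.finrank ℝ E = 2) {f : Module.Dual ℝ E} (hf : f ≠ 0) (c : ℝ) :
    IsLine {y | f y = c} := by
  have hker : Module.finrank ℝ (LinearMap.ker f) = 1 := by
    have := Module.Dual.finrank_ker_add_one_of_ne_zero hf
    omega
  obtain ⟨w, hw, hspan⟩ := finrank_eq_one_iff'.mp hker
  obtain ⟨x, hx⟩ := LinearMap.surjective hf c
  refine ⟨x, w, by simpa using hw, Set.ext fun y => ⟨fun hy => ?_, ?_⟩⟩
  · obtain ⟨t, ht⟩ := hspan ⟨y - x, by simp [show f y = c from hy, hx]⟩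
    exact ⟨t, by rw [← sub_eq_iff_eq_add']; exact (congrArg Subtype.val ht).symm⟩
  · rintro ⟨t, rfl⟩
    simp [hx, (LinearMap.mem_ker.mp w.2 : f w = 0)]

theorem exists_mem_raySet_apply_eq {f : Module.Dual ℝ (ℝ × ℝ)} {p v : ℝ × ℝ} (hv : 0 < f v)
    {c : ℝ} (hc : f p ≤ c) : ∃ y ∈ raySet p v, f y = c :=
  ⟨p + ((c - f p) / f v) • v, ⟨_, div_nonneg (sub_nonneg.mpr hc) hv.le, rfl⟩, by
    rw [map_add, map_smul, smul_eq_mul, div_mul_cancel₀ _ hv.ne']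
    ring⟩

theorem SeparatedTriple.exists_apply_nonpos {p v : Fin 3 → ℝ × ℝ} (hsep : SeparatedTriple p v)
    (f : Module.Dual ℝ (ℝ × ℝ)) : ∃ i, f (v i) ≤ 0 := by
  by_contra! hpos
  have hf : f ≠ 0 := fun h => by simpa [h] using hpos 0
  obtain ⟨c, hc⟩ := (Set.finite_range fun i => f (p i)).bddAbove
  refine hsep.2.2 ⟨_, isLine_setOf_apply_eq (by simp) hf c, fun i => ?_⟩
  obtain ⟨y, hy, hfy⟩ := exists_mem_raySet_apply_eq (hpos i) (hc ⟨i, rfl⟩)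
  exact ⟨y, hfy, hy⟩

theorem segment_subset_convexHull_range {ι E : Type*} [AddCommGroup E] [Module ℝ E]
    (p : ι → E) (i j : ι) :
    segment ℝ (p i) (p j) ⊆ convexHull ℝ (Set.range p) :=
  (convex_convexHull ℝ _).segment_subset (subset_convexHull ℝ _ ⟨i, rfl⟩)
    (subset_convexHull ℝ _ ⟨j, rfl⟩)

theorem pos_apply_of_mem_halfStrip {p v : Fin 3 → ℝ × ℝ} {i : Fin 3} {x : ℝ × ℝ}
    (hx : x ∈ halfStrip p v i) {f : Module.Dual ℝ (ℝ × ℝ)} {u : ℝ}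
    (hfX : ∀ y ∈ convexHull ℝ (Set.range p), f y < u) (hfx : u < f x) : 0 < f (v i) := by
  obtain ⟨q, hq, t, ht, rfl⟩ := hx
  have hfq := hfX q (segment_subset_convexHull_range p _ _ hq)
  rw [map_add, map_smul, smul_eq_mul] at hfx
  exact pos_of_mul_pos_right (by linarith) ht

theorem stmt_17_general (p v : Fin 3 → ℝ × ℝ) (hsep : SeparatedTriple p v) :
    jointRegion p v ⊆ convexHull ℝ (Set.range p) := by
  intro x hx
  by_contra hxX
  obtain ⟨f, u, hfX, hfx⟩ := geometric_hahn_banach_closed_point (convex_convexHull ℝ _)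
    ((Set.finite_range p).isCompact_convexHull ℝ).isClosed hxX
  obtain ⟨i, hi⟩ := hsep.exists_apply_nonpos f.toLinearMap
  exact hi.not_gt (pos_apply_of_mem_halfStrip (Set.mem_iInter.mp hx i) hfX hfx)

theorem stmt_17 (p v : Fin 3 → ℝ × ℝ) (hsep : SeparatedTriple p v)
    (hne : (jointRegion p v).Nonempty) :
    jointRegion p v ⊆ convexHull ℝ (Set.range p) :=
  stmt_17_general p v hsep
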